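/- Let (θ_k) be a sequence of nonnegative reals that is bounded above by ρ̄, and suppose there exist nonnegative quantities d_k such that d_k ≤ θ_k² − θ_{k+1}² + (θ_{k+1} − θ̄_{k+1})(θ_{k+1} + θ̄_{k+1}) for auxiliary values θ̄_{k+1} ≥ 0 with |θ_{k+1} − θ̄_{k+1}| ≤ c·ε_k where (ε_k) is summable with sum C₁ and θ̄_{k+1} ≤ ρ̄. Then ∑_{k=0}^∞ d_k ≤ θ_0² + 2ρ̄·c·C₁ < ∞. -/
import Mathlib

theorem stmt_12 (θ θbar d ε : ℕ → ℝ) (ρ c C₁ : ℝ) (hc : 0 ≤ c)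
    (hθ : ∀ k, 0 ≤ θ k) (hθρ : ∀ k, θ k ≤ ρ)
    (hθbar : ∀ k, 0 ≤ θbar (k + 1)) (hθbarρ : ∀ k, θbar (k + 1) ≤ ρ)
    (hd : ∀ k, 0 ≤ d k) (hε : ∀ k, 0 ≤ ε k) (hsum : HasSum ε C₁)
    (hgap : ∀ k, |θ (k + 1) - θbar (k + 1)| ≤ c * ε k)
    (hrec : ∀ k, d k ≤ θ k ^ 2 - θ (k + 1) ^ 2
        + (θ (k + 1) - θbar (k + 1)) * (θ (k + 1) + θbar (k + 1))) :
    Summable d ∧ ∑' k, d k ≤ θ 0 ^ 2 + 2 * ρ * c * C₁ := by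
  have hρ : 0 ≤ ρ := le_trans (hθ 0) (hθρ 0)
  have hbound : ∀ k, d k ≤ θ k ^ 2 - θ (k + 1) ^ 2 + 2 * ρ * (c * ε k) := by
    intro k
    refine (hrec k).trans (by
      have h1 : (θ (k + 1) - θbar (k + 1)) * (θ (k + 1) + θbar (k + 1)) ≤
          (c * ε k) * (2 * ρ) := by
        calc (θ (k + 1) - θbar (k + 1)) * (θ (k + 1) + θbar (k + 1))
            ≤ |θ (k + 1) - θbar (k + 1)| * (θ (k + 1) + θbar (k + 1)) := by
              exact mul_le_mul_of_nonneg_right (le_abs_self _)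
                (add_nonneg (hθ _) (hθbar k))
          _ ≤ (c * ε k) * (2 * ρ) := by
              apply mul_le_mul (hgap k) ?_ (add_nonneg (hθ _) (hθbar k))
                (mul_nonneg hc (hε k))
              have := hθρ (k + 1); have := hθbarρ k; linarith
      linarith)
  have hpartial : ∀ n, ∑ k ∈ Finset.range n, d k ≤ θ 0 ^ 2 + 2 * ρ * c * C₁ := by
    intro n
    have h1 : ∑ k ∈ Finset.range n, d k ≤
        ∑ k ∈ Finset.range n, (θ k ^ 2 - θ (k + 1) ^ 2 + 2 * ρ * (c * ε k)) :=
      Finset.sum_le_sum fun k _ => hbound k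
    rw [Finset.sum_add_distrib, Finset.sum_range_sub' (fun k => θ k ^ 2)] at h1
    have h2 : ∑ k ∈ Finset.range n, 2 * ρ * (c * ε k) ≤ 2 * ρ * c * C₁ := by
      have h3 : ∑ k ∈ Finset.range n, ε k ≤ C₁ :=
        sum_le_hasSum _ (fun k _ => hε k) hsum
      calc ∑ k ∈ Finset.range n, 2 * ρ * (c * ε k)
          = 2 * ρ * c * ∑ k ∈ Finset.range n, ε k := by
            rw [Finset.mul_sum]; exact Finset.sum_congr rfl fun k _ => by ring
        _ ≤ 2 * ρ * c * C₁ := by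
            apply mul_le_mul_of_nonneg_left h3 (by positivity)
    have h4 : 0 ≤ θ n ^ 2 := by positivity
    linarith
  have hsummable : Summable d := summable_of_sum_range_le hd hpartial
  exact ⟨hsummable, Summable.tsum_le_of_sum_range_le hsummable hpartial⟩
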